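/- Every lattice polynomial function p : L^n → L over a linear order L satisfies the median-based pivotal decomposition p(t) = median(p(t with t_i := a), t_i, p(t with t_i := b)) for each coordinate i, where median(x,y,z) = (x∧y)∨(y∧z)∨(z∧x) and a ≤ t_j ≤ b for all j. -/

import Mathlib

/-!
Fixing all coordinates but the `i`-th, a lattice polynomial becomes a unary function of the
form `c ↦ x ⊔ c ⊓ z` with `x ≤ z`: projections have this form, and by distributivity the form is
preserved by `⊓` and `⊔`. Evaluating at `c = ⊥` and `c = ⊤` identifies `x` and `z`, and for
`x ≤ z` the median of `x`, `c`, `z` is exactly `x ⊔ c ⊓ z`.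
-/

/-- Lattice polynomial functions: the smallest class of functions `L^n → L` containing the
coordinate projections and closed under pointwise binary min and max. -/
inductive IsLatticePolynomial {L : Type*} [LinearOrder L] {n : ℕ} :
    ((Fin n → L) → L) → Prop
  | proj (k : Fin n) : IsLatticePolynomial (fun t => t k)
  | inf {p q : (Fin n → L) → L} : IsLatticePolynomial p → IsLatticePolynomial q →
      IsLatticePolynomial (fun t => p t ⊓ q t)
  | sup {p q : (Fin n → L) → L} : IsLatticePolynomial p → IsLatticePolynomial q →
      IsLatticePolynomial (fun t => p t ⊔ q t)

open Function

section Lattice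

variable {α : Type*}

theorem sup_inf_inf_sup_inf_of_le [DistribLattice α] {a b a' b' : α} (c : α) (h : a ≤ b)
    (h' : a' ≤ b') : (a ⊔ c ⊓ b) ⊓ (a' ⊔ c ⊓ b') = a ⊓ a' ⊔ c ⊓ (b ⊓ b') := by
  rw [← sup_inf_assoc_of_le c h, ← sup_inf_assoc_of_le c h', inf_inf_inf_comm, ← sup_inf_right,
    sup_inf_assoc_of_le c (inf_le_inf h h')]

theorem sup_inf_sup_sup_inf [DistribLattice α] (a b a' b' c : α) :
    (a ⊔ c ⊓ b) ⊔ (a' ⊔ c ⊓ b') = a ⊔ a' ⊔ c ⊓ (b ⊔ b') := by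
  rw [sup_sup_sup_comm, inf_sup_left]

theorem inf_sup_inf_sup_inf_eq_sup_inf_of_le [Lattice α] {x z : α} (y : α) (h : x ≤ z) :
    x ⊓ y ⊔ y ⊓ z ⊔ z ⊓ x = x ⊔ y ⊓ z := by
  rw [inf_eq_right.2 h, sup_comm, ← sup_assoc, sup_inf_self]

end Lattice

namespace IsLatticePolynomial

variable {L : Type*} [LinearOrder L] {n : ℕ} {p : (Fin n → L) → L}

theorem monotone (hp : IsLatticePolynomial p) : Monotone p := by
  induction hp with
  | proj k => exact fun s u h => h k
  | inf _ _ ihp ihq => exact fun s u h => inf_le_inf (ihp h) (ihq h)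
  | sup _ _ ihp ihq => exact fun s u h => sup_le_sup (ihp h) (ihq h)

theorem eq_update_bot_sup_inf_update_top [BoundedOrder L] (hp : IsLatticePolynomial p)
    (i : Fin n) (t : Fin n → L) : p t = p (update t i ⊥) ⊔ t i ⊓ p (update t i ⊤) := by
  have hle : update t i (⊥ : L) ≤ update t i ⊤ := update_mono bot_le
  induction hp with
  | proj k =>
    rcases eq_or_ne k i with rfl | hk
    · simp
    · simp [update_of_ne hk]
  | inf hp hq ihp ihq =>
    dsimp only
    rw [ihp, ihq, sup_inf_inf_sup_inf_of_le _ (hp.monotone hle) (hq.monotone hle)]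
  | sup _ _ ihp ihq =>
    dsimp only
    rw [ihp, ihq, sup_inf_sup_sup_inf]

end IsLatticePolynomial

/-- Median-based pivotal decomposition:
`p(t) = median (p(t with t_i := ⊥)) (t_i) (p(t with t_i := ⊤))`,
where `median x y z = (x⊓y) ⊔ (y⊓z) ⊔ (z⊓x)`. -/
theorem latticePolynomial_median_decomposition {L : Type*} [LinearOrder L] [BoundedOrder L]
    {n : ℕ} (p : (Fin n → L) → L) (hp : IsLatticePolynomial p) (i : Fin n) (t : Fin n → L) :
    p t = (p (Function.update t i ⊥) ⊓ t i) ⊔ (t i ⊓ p (Function.update t i ⊤)) ⊔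
        (p (Function.update t i ⊤) ⊓ p (Function.update t i ⊥)) := by
  have hle : p (update t i ⊥) ≤ p (update t i ⊤) := hp.monotone (update_mono bot_le)
  rw [inf_sup_inf_sup_inf_eq_sup_inf_of_le _ hle]
  exact hp.eq_update_bot_sup_inf_update_top i t
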